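/- Let N ≥ 2, D_N = 2/(N ω_N), a ∈ ℝ^N \ {0}, and let y₀ ∈ ℝ^N \ {0} satisfy a = D_N y₀/|y₀|^{2N-2}. Then the Hessian of F(y) = ⟨a,y⟩ - D_N/((4-2N)|y|^{2N-4}) (for N ≥ 3; for N = 2 take F(y) = ⟨a,y⟩ - (1/π) ln|y|) at y₀ equals -D_N |y₀|^{-(2N-2)} (I + (2-2N) y₀ y₀ᵀ/|y₀|²), and its determinant equals (-1)^N (3-2N) |a|^{N(2N-2)/(2N-3)} / D_N^{N/(2N-3)}, which is nonzero; in particular y₀ is a non-degenerate critical point of F. -/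

import Mathlib

/-!
Away from the origin `F(y) = ⟪a, y⟫ - φ(‖y‖²)` with `φ'(t) = (D/2) t^{1-N}` (for `N = 2` because
`ω₂ = π`, i.e. `D₂ = 1/π`), so `∇F(y) = a - D ‖y‖^{-(2N-2)} y`. Differentiating once more gives the
Hessian `-λ (I + (2-2N) y₀y₀ᵀ/‖y₀‖²)` with `λ = D ‖y₀‖^{-(2N-2)}`, a scalar times identity plus rank
one, whose determinant is `(-λ)^N (3-2N)` by the matrix determinant lemma. Finally `‖a‖ = λ ‖y₀‖`
lets one eliminate `‖y₀‖`: `λ = ‖a‖^{(2N-2)/(2N-3)} / D^{1/(2N-3)}`.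
-/
open Real MeasureTheory
open scoped RealInnerProductSpace

theorem sq_zpow_natCast_sub_natCast {k N : ℕ} (h : k ≤ N) (r : ℝ) :
    (r ^ 2) ^ ((k : ℤ) - N) = (r ^ (2 * N - 2 * k))⁻¹ := by
  rw [← zpow_natCast r 2, ← zpow_mul, ← zpow_natCast r (2 * N - 2 * k), ← zpow_neg]
  congr 1
  omega

section RadialPotential

variable {E : Type*} [NormedAddCommGroup E] [InnerProductSpace ℝ E]

theorem hasFDerivAt_norm_sq_zpow (m : ℤ) {z : E} (hz : z ≠ 0) :
    HasFDerivAt (fun y : E => (‖y‖ ^ 2) ^ m) ((2 * m * (‖z‖ ^ 2) ^ (m - 1)) • innerSL ℝ z) z := by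
  have hz2 : ‖z‖ ^ 2 ≠ 0 := by positivity
  refine ((hasDerivAt_zpow m _ (Or.inl hz2)).comp_hasFDerivAt z
    (hasStrictFDerivAt_norm_sq z).hasFDerivAt).congr_fderiv ?_
  rw [← Nat.cast_smul_eq_nsmul ℝ, smul_smul]
  congr 1
  push_cast
  ring

noncomputable def radialPotential (N : ℕ) (D : ℝ) (y : E) : ℝ :=
  if N = 2 then 1 / π * log ‖y‖ else D / ((4 - 2 * N) * ‖y‖ ^ (2 * N - 4))

theorem hasFDerivAt_radialPotential {N : ℕ} (hN : 2 ≤ N) {D : ℝ} (hD : N = 2 → D = 1 / π)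
    {z : E} (hz : z ≠ 0) :
    HasFDerivAt (radialPotential N D) ((D * (‖z‖ ^ 2) ^ (1 - (N : ℤ))) • innerSL ℝ z) z := by
  have hz2 : ‖z‖ ^ 2 ≠ 0 := by positivity
  -- Both branches are rewritten as functions of `‖y‖²` on all of `E`: at `y = 0` the junk values
  -- `log 0 = 0`, `x / 0 = 0` and `0 ^ (negative : ℤ) = 0` agree.
  rcases eq_or_ne N 2 with rfl | hN2
  · obtain rfl := hD rfl
    have h : radialPotential 2 (1 / π) = fun y : E => 1 / (2 * π) * log (‖y‖ ^ 2) := by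
      funext y
      simp only [radialPotential, if_true, Real.log_pow]
      ring
    rw [h]
    refine (((hasStrictFDerivAt_norm_sq z).hasFDerivAt.log hz2).const_mul
      (1 / (2 * π))).congr_fderiv ?_
    rw [← Nat.cast_smul_eq_nsmul ℝ, smul_smul, smul_smul]
    congr 1
    norm_num
    field_simp
  · have h : radialPotential N D =
        fun y : E => D / (4 - 2 * N) * (‖y‖ ^ 2) ^ ((2 : ℕ) - (N : ℤ)) := by
      funext y
      rw [radialPotential, if_neg hN2, sq_zpow_natCast_sub_natCast hN, ← div_eq_mul_inv, div_div]
    have hN3 : (4 : ℝ) - 2 * N ≠ 0 := by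
      have : (3 : ℝ) ≤ N := by exact_mod_cast (show 3 ≤ N by omega)
      linarith
    rw [h]
    refine ((hasFDerivAt_norm_sq_zpow _ hz).const_mul (D / (4 - 2 * N))).congr_fderiv ?_
    rw [smul_smul, show ((2 : ℕ) : ℤ) - N - 1 = 1 - N by ring]
    congr 1
    push_cast
    field_simp
    ring

theorem fderiv_inner_sub_radialPotential {N : ℕ} (hN : 2 ≤ N) {D : ℝ} (hD : N = 2 → D = 1 / π)
    (a : E) {z : E} (hz : z ≠ 0) :
    fderiv ℝ (fun y => ⟪a, y⟫ - radialPotential N D y) z =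
      innerSL ℝ a - (D * (‖z‖ ^ 2) ^ (1 - (N : ℤ))) • innerSL ℝ z :=
  ((innerSL ℝ a).hasFDerivAt.sub (hasFDerivAt_radialPotential hN hD hz)).fderiv

theorem fderiv_fderiv_inner_sub_radialPotential_apply {N : ℕ} (hN : 2 ≤ N) {D : ℝ}
    (hD : N = 2 → D = 1 / π) (a : E) {y₀ : E} (hy₀ : y₀ ≠ 0) (v w : E) :
    fderiv ℝ (fun z => fderiv ℝ (fun y => ⟪a, y⟫ - radialPotential N D y) z v) y₀ w =
      -(D / ‖y₀‖ ^ (2 * N - 2)) * (⟪v, w⟫ + (2 - 2 * N) * ⟪y₀, v⟫ * ⟪y₀, w⟫ / ‖y₀‖ ^ 2) := by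
  have hgrad : (fun z => fderiv ℝ (fun y => ⟪a, y⟫ - radialPotential N D y) z v) =ᶠ[nhds y₀]
      fun z => ⟪a, v⟫ - D * ((‖z‖ ^ 2) ^ (1 - (N : ℤ)) * ⟪v, z⟫) := by
    filter_upwards [isOpen_compl_singleton.eventually_mem hy₀] with z hz
    rw [fderiv_inner_sub_radialPotential hN hD a hz]
    simp only [sub_apply, coe_innerSL_apply, smul_apply, real_inner_comm, smul_eq_mul,
      sub_right_inj]
    ring
  have hderiv : HasFDerivAt (fun z => ⟪a, v⟫ - D * ((‖z‖ ^ 2) ^ (1 - (N : ℤ)) * ⟪v, z⟫)) _ y₀ :=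
    (((hasFDerivAt_norm_sq_zpow (1 - N) hy₀).mul (innerSL ℝ v).hasFDerivAt).const_mul D).const_sub
      ⟪a, v⟫
  rw [hgrad.fderiv_eq, hderiv.fderiv]
  have hy₀2 : ‖y₀‖ ^ 2 ≠ 0 := by positivity
  simp only [coe_innerSL_apply, Int.cast_sub, Int.cast_one, Int.cast_natCast, add_apply, neg_apply,
    smul_apply, smul_eq_mul]
  rw [zpow_sub_one₀ hy₀2, show (1 : ℤ) - N = ((1 : ℕ) : ℤ) - N by simp,
    sq_zpow_natCast_sub_natCast (by omega), real_inner_comm y₀ v]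
  field_simp

end RadialPotential

open Matrix in
theorem det_eq_pow_mul_one_add_of_apply_eq {ι : Type*} [Fintype ι] [DecidableEq ι] (c s : ℝ)
    {y : EuclideanSpace ℝ ι} (hy : y ≠ 0) {H : Matrix ι ι ℝ}
    (hH : ∀ i j, H i j = c * ((if i = j then 1 else 0) + s * y i * y j / ‖y‖ ^ 2)) :
    H.det = c ^ Fintype.card ι * (1 + s) := by
  have hH' : H = c • (1 + vecMulVec y ((s / ‖y‖ ^ 2) • y.ofLp)) := by
    ext i j
    rw [hH, Matrix.smul_apply, Matrix.add_apply, one_apply, vecMulVec_apply, Pi.smul_apply,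
      smul_eq_mul, smul_eq_mul]
    ring
  have hdot : y.ofLp ⬝ᵥ y.ofLp = ‖y‖ ^ 2 := by
    rw [← real_inner_self_eq_norm_sq, EuclideanSpace.inner_eq_star_dotProduct, star_trivial]
  rw [hH', det_smul, vecMulVec_eq Unit, det_one_add_replicateCol_mul_replicateRow, smul_dotProduct,
    hdot, smul_eq_mul, div_mul_cancel₀ _ (by positivity)]

-- Solve `A = D / r ^ p * r` for `r` and substitute back into `D / r ^ p`.
theorem div_rpow_rpow_eq_of_eq_add_one {D r p q : ℝ} (hD : 0 < D) (hr : 0 < r)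
    (hpq : p = q + 1) (hq : q ≠ 0) (n : ℝ) :
    (D / r ^ p) ^ n = (D / r ^ p * r) ^ (n * p / q) / D ^ (n / q) := by
  have hrp : 0 < r ^ p := rpow_pos_of_pos hr p
  have hA : 0 < D / r ^ p * r := by positivity
  rw [← exp_log (by positivity : 0 < (D / r ^ p) ^ n),
    ← exp_log (by positivity : 0 < (D / r ^ p * r) ^ (n * p / q) / D ^ (n / q))]
  congr 1
  rw [log_rpow (by positivity), log_div hD.ne' hrp.ne', log_div (by positivity) (by positivity),
    log_rpow hA, log_rpow hD, log_mul (by positivity) hr.ne', log_div hD.ne' hrp.ne', log_rpow hr]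
  subst hpq
  field_simp
  ring

theorem toReal_volume_ball_pos {ι : Type*} [Fintype ι] (x : EuclideanSpace ℝ ι) {r : ℝ}
    (hr : 0 < r) : 0 < (volume (Metric.ball x r)).toReal :=
  ENNReal.toReal_pos (Metric.measure_ball_pos _ _ hr).ne' measure_ball_lt_top.ne

theorem toReal_volume_unitBall_fin_two :
    (volume (Metric.ball (0 : EuclideanSpace ℝ (Fin 2)) 1)).toReal = π := by
  rw [EuclideanSpace.volume_ball_fin_two, ENNReal.ofReal_one, one_pow, one_mul,
    ENNReal.toReal_ofReal pi_pos.le]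

theorem stmt_3_general (N : ℕ) (hN : 2 ≤ N)
    (ω DN : ℝ)
    (hω : ω = (volume (Metric.ball (0 : EuclideanSpace ℝ (Fin N)) 1)).toReal)
    (hD : DN = 2 / ((N : ℝ) * ω))
    (a y₀ : EuclideanSpace ℝ (Fin N)) (hy₀ : y₀ ≠ 0)
    (hay : a = (DN / ‖y₀‖ ^ (2 * N - 2)) • y₀)
    (F : EuclideanSpace ℝ (Fin N) → ℝ)
    (hF : ∀ y, F y = (inner ℝ a y : ℝ) -
      (if N = 2 then (1 / π) * Real.log ‖y‖
       else DN / (((4 : ℝ) - 2 * N) * ‖y‖ ^ (2 * N - 4))))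
    (H : Matrix (Fin N) (Fin N) ℝ)
    (hH : ∀ i j, H i j = -(DN / ‖y₀‖ ^ (2 * N - 2)) *
      ((if i = j then (1 : ℝ) else 0) + ((2 : ℝ) - 2 * N) * y₀ i * y₀ j / ‖y₀‖ ^ 2)) :
    (∀ i j, fderiv ℝ (fun z => fderiv ℝ F z (EuclideanSpace.single i 1)) y₀
        (EuclideanSpace.single j 1) = H i j) ∧
    H.det = (-1 : ℝ) ^ N * ((3 : ℝ) - 2 * N) *
      ‖a‖ ^ (((N : ℝ) * (2 * (N : ℝ) - 2)) / (2 * (N : ℝ) - 3)) /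
      DN ^ ((N : ℝ) / (2 * (N : ℝ) - 3)) ∧
    H.det ≠ 0 := by
  have hN' : (2 : ℝ) ≤ N := by exact_mod_cast hN
  have hDpos : 0 < DN := by
    have := toReal_volume_ball_pos (0 : EuclideanSpace ℝ (Fin N)) one_pos
    rw [hD, hω]
    positivity
  have hD2 : N = 2 → DN = 1 / π := by
    rintro rfl
    rw [hD, hω, toReal_volume_unitBall_fin_two]
    field_simp
    norm_num
  set c := DN / ‖y₀‖ ^ (2 * N - 2) with hc
  have hcpos : 0 < c := by positivity
  have hdet : H.det = (-c) ^ N * (3 - 2 * N) := by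
    rw [det_eq_pow_mul_one_add_of_apply_eq (-c) (2 - 2 * N) hy₀ hH, Fintype.card_fin]
    ring
  refine ⟨fun i j => ?_, ?_, ?_⟩
  · have hF' : F = fun y => ⟪a, y⟫ - radialPotential N DN y := funext hF
    rw [hF', fderiv_fderiv_inner_sub_radialPotential_apply hN hD2 a hy₀, hH]
    simp [EuclideanSpace.inner_single_right, eq_comm (a := j), hc]
  · have hnorm : ‖a‖ = c * ‖y₀‖ := by rw [hay, norm_smul, norm_of_nonneg hcpos.le]
    have hc' : c = DN / ‖y₀‖ ^ (2 * (N : ℝ) - 2) := by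
      rw [hc, ← rpow_natCast, Nat.cast_sub (by omega)]
      push_cast
      rfl
    rw [hdet, neg_pow, hnorm, ← rpow_natCast c N, hc',
      div_rpow_rpow_eq_of_eq_add_one hDpos (norm_pos_iff.2 hy₀)
        (by ring : 2 * (N : ℝ) - 2 = (2 * N - 3) + 1) (by linarith)]
    ring
  · rw [hdet]
    exact mul_ne_zero (pow_ne_zero _ (neg_ne_zero.2 hcpos.ne')) (by linarith)

/-- For `N ≥ 2`, `D_N = 2/(N ω_N)`, `a ≠ 0` and `y₀ ≠ 0` with `a = D_N y₀/|y₀|^{2N-2}`,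
the Hessian of `F(y) = ⟨a,y⟩ - D_N/((4-2N)|y|^{2N-4})` (for `N = 2`,
`F(y) = ⟨a,y⟩ - (1/π) ln|y|`) at `y₀` equals
`-D_N |y₀|^{-(2N-2)} (I + (2-2N) y₀ y₀ᵀ/|y₀|²)`, whose determinant is
`(-1)^N (3-2N) |a|^{N(2N-2)/(2N-3)}/D_N^{N/(2N-3)} ≠ 0`; so `y₀` is non-degenerate. -/
theorem stmt_3 (N : ℕ) (hN : 2 ≤ N)
    (ω DN : ℝ)
    (hω : ω = (volume (Metric.ball (0 : EuclideanSpace ℝ (Fin N)) 1)).toReal)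
    (hD : DN = 2 / ((N : ℝ) * ω))
    (a y₀ : EuclideanSpace ℝ (Fin N)) (ha : a ≠ 0) (hy₀ : y₀ ≠ 0)
    (hay : a = (DN / ‖y₀‖ ^ (2 * N - 2)) • y₀)
    (F : EuclideanSpace ℝ (Fin N) → ℝ)
    (hF : ∀ y, F y = (inner ℝ a y : ℝ) -
      (if N = 2 then (1 / π) * Real.log ‖y‖
       else DN / (((4 : ℝ) - 2 * N) * ‖y‖ ^ (2 * N - 4))))
    (H : Matrix (Fin N) (Fin N) ℝ)
    (hH : ∀ i j, H i j = -(DN / ‖y₀‖ ^ (2 * N - 2)) *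
      ((if i = j then (1 : ℝ) else 0) + ((2 : ℝ) - 2 * N) * y₀ i * y₀ j / ‖y₀‖ ^ 2)) :
    (∀ i j, fderiv ℝ (fun z => fderiv ℝ F z (EuclideanSpace.single i 1)) y₀
        (EuclideanSpace.single j 1) = H i j) ∧
    H.det = (-1 : ℝ) ^ N * ((3 : ℝ) - 2 * N) *
      ‖a‖ ^ (((N : ℝ) * (2 * (N : ℝ) - 2)) / (2 * (N : ℝ) - 3)) /
      DN ^ ((N : ℝ) / (2 * (N : ℝ) - 3)) ∧
    H.det ≠ 0 :=
  stmt_3_general N hN ω DN hω hD a y₀ hy₀ hay F hF H hH
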